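/- arXiv:2404.07599 — 2 statements merged into one kernel-verified Lean document; each statement's English description precedes it below -/
import Mathlib

section
/- For every nontrivial real Banach space X (pointed at its origin), the set (LDirA(X) \ PNA(X)) ∪ {0} contains an isometric copy of ℓ∞: there exists a linear map T : ℓ∞ → Lip₀(X) such that ‖T a‖ = ‖a‖_∞ for every a ∈ ℓ∞, and for every nonzero a ∈ ℓ∞, the function T a attains its norm locally directionally but does not attain its pointwise norm. -/
open Filter Set
open scoped ZeroAtInfty ENNReal NNReal

/-- The optimal Lipschitz constant (Lipschitz norm) of `f : M → ℝ`. -/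
noncomputable def lipNorm {M : Type*} [MetricSpace M] (f : M → ℝ) : ℝ :=
  sSup {r : ℝ | ∃ p q : M, p ≠ q ∧ r = |f p - f q| / dist p q}

/-- `f` belongs to `Lip₀(M)`: it is Lipschitz and vanishes at the base point. -/
def MemLip0 {M : Type*} [MetricSpace M] (base : M) (f : M → ℝ) : Prop :=
  f base = 0 ∧ ∃ K : ℝ≥0, LipschitzWith K f

/-- `f` strongly attains its (Lipschitz) norm. -/
def StronglyAttains {M : Type*} [MetricSpace M] (f : M → ℝ) : Prop :=
  ∃ p q : M, p ≠ q ∧ |f p - f q| = lipNorm f * dist p q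

/-- `f` attains its pointwise norm. -/
def PointwiseAttains {M : Type*} [MetricSpace M] (f : M → ℝ) : Prop :=
  ∃ p : M, sSup {r : ℝ | ∃ q : M, q ≠ p ∧ r = |f p - f q| / dist p q} = lipNorm f

/-- `f` attains its norm through a derivative: for some `x` and unit direction `e`, the
two-sided directional derivative exists and has modulus `‖f‖`. -/
def DerAttains {X : Type*} [NormedAddCommGroup X] [NormedSpace ℝ X] (f : X → ℝ) : Prop :=
  ∃ x e : X, ‖e‖ = 1 ∧ ∃ L : ℝ,
    Filter.Tendsto (fun t : ℝ => (f (x + t • e) - f x) / t)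
      (nhdsWithin (0 : ℝ) {(0 : ℝ)}ᶜ) (nhds L) ∧
    |L| = lipNorm f

/-- `f` attains its norm locally directionally at a point `x̄` in the direction `u`
toward `z`. -/
def LocDirAttains {X : Type*} [NormedAddCommGroup X] [NormedSpace ℝ X] (f : X → ℝ) : Prop :=
  ∃ (xbar u : X) (z : ℝ), ‖u‖ = 1 ∧ |z| = lipNorm f ∧
    ∃ p q : ℕ → X, (∀ n, p n ≠ q n) ∧
      Filter.Tendsto (fun n => (f (q n) - f (p n)) / ‖q n - p n‖) Filter.atTop (nhds z) ∧
      Filter.Tendsto (fun n => ‖p n - q n‖⁻¹ • (p n - q n)) Filter.atTop (nhds u) ∧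
      Filter.Tendsto p Filter.atTop (nhds xbar) ∧
      Filter.Tendsto q Filter.atTop (nhds xbar)

/-! Fix a unit vector `e` and a norm-one functional `g` with `g e = 1`, and send `a ∈ ℓ∞` to
`φ_a ∘ g`, where `φ_a : ℝ → ℝ` is a sum of slope-one tents with disjoint supports accumulating
at `0`, the tent centred at `2⁻ᵐ` carrying the coefficient `(1 - 2⁻ᵐ) a_{(unpair m).1}`. Every
coordinate of `a` recurs with weights tending to `1`, so the slopes of tents near `0`
accumulate at some `z` with `|z| = ‖a‖`: the norm is attained locally directionally at `0`
along `e`. No weight equals `1`, however: from a point `x > 0`, the tents met near `x` have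
weights bounded away from `1`, while far from `x` both `φ_a x` and `φ_a y` are small compared
to `|x - y|`, as `|φ_a y| ≤ ‖a‖ y / 3`. So the slopes from each point stay below some
`B < ‖a‖`. -/

open scoped Topology lp

section LipNorm

variable {M : Type*} [MetricSpace M] {f : M → ℝ} {K : ℝ≥0}

lemma LipschitzWith.abs_sub_div_dist_le (hf : LipschitzWith K f) (p q : M) :
    |f p - f q| / dist p q ≤ K :=
  div_le_of_le_mul₀ dist_nonneg K.coe_nonneg (by simpa [Real.dist_eq] using hf.dist_le_mul p q)

lemma lipNorm_le (hf : LipschitzWith K f) : lipNorm f ≤ K :=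
  Real.sSup_le (by rintro _ ⟨p, q, -, rfl⟩; exact hf.abs_sub_div_dist_le p q) K.coe_nonneg

lemma abs_sub_div_dist_le_lipNorm (hf : LipschitzWith K f) {p q : M} (hpq : p ≠ q) :
    |f p - f q| / dist p q ≤ lipNorm f :=
  le_csSup ⟨K, by rintro _ ⟨p, q, -, rfl⟩; exact hf.abs_sub_div_dist_le p q⟩ ⟨p, q, hpq, rfl⟩

lemma abs_le_lipNorm_of_tendsto (hf : LipschitzWith K f) {p q : ℕ → M} (hpq : ∀ n, p n ≠ q n)
    {z : ℝ} (h : Tendsto (fun n => (f (q n) - f (p n)) / dist (q n) (p n)) atTop (𝓝 z)) :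
    |z| ≤ lipNorm f :=
  le_of_tendsto' h.abs fun n => by
    rw [abs_div, abs_dist]
    exact abs_sub_div_dist_le_lipNorm hf (hpq n).symm

lemma not_pointwiseAttains_of_forall_exists_lt
    (h : ∀ p, ∃ B < lipNorm f, 0 ≤ B ∧ ∀ q, |f p - f q| ≤ B * dist p q) :
    ¬ PointwiseAttains f := by
  rintro ⟨p, hp⟩
  obtain ⟨B, hB, hB0, hpB⟩ := h p
  refine hB.not_ge (hp ▸ Real.sSup_le ?_ hB0)
  rintro _ ⟨q, -, rfl⟩
  exact div_le_of_le_mul₀ dist_nonneg hB0 (hpB q)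

end LipNorm

namespace LinftyEmbedding

noncomputable def tentCenter (m : ℕ) : ℝ := 2⁻¹ ^ m

noncomputable def tent (m : ℕ) (x : ℝ) : ℝ := max 0 (tentCenter m / 4 - |x - tentCenter m|)

lemma tentCenter_pos (m : ℕ) : 0 < tentCenter m := by unfold tentCenter; positivity

lemma tentCenter_le_one (m : ℕ) : tentCenter m ≤ 1 := pow_le_one₀ (by norm_num) (by norm_num)

lemma tentCenter_le_half_of_lt {m m' : ℕ} (h : m < m') : tentCenter m' ≤ tentCenter m / 2 :=
  calc (2⁻¹ : ℝ) ^ m' ≤ 2⁻¹ ^ (m + 1) := pow_le_pow_of_le_one (by norm_num) (by norm_num) h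
    _ = 2⁻¹ ^ m / 2 := by ring

lemma tendsto_tentCenter : Tendsto tentCenter atTop (𝓝 0) :=
  tendsto_pow_atTop_nhds_zero_of_lt_one (by norm_num) (by norm_num)

variable {m m' : ℕ} {x y z : ℝ}

lemma tent_nonneg : 0 ≤ tent m x := le_max_left _ _

lemma tent_eq_zero_iff : tent m x = 0 ↔ tentCenter m / 4 ≤ |x - tentCenter m| := by
  rw [tent, max_eq_left_iff, sub_nonpos]

lemma tent_ne_zero_iff : tent m x ≠ 0 ↔ |x - tentCenter m| < tentCenter m / 4 := by
  rw [Ne, tent_eq_zero_iff, not_le]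

lemma abs_tent_sub_tent_le (m : ℕ) (x y : ℝ) : |tent m x - tent m y| ≤ |x - y| := by
  rw [tent, tent, max_comm 0, max_comm 0]
  refine (abs_max_sub_max_le_abs _ _ _).trans ?_
  rw [sub_sub_sub_cancel_left, ← abs_sub_comm]
  exact (abs_abs_sub_abs_le_abs_sub _ _).trans (by rw [sub_sub_sub_cancel_right])

lemma tent_le_abs_sub (hz : tent m z = 0) : tent m x ≤ |x - z| := by
  simpa [hz] using (le_abs_self _).trans (abs_tent_sub_tent_le m x z)

lemma tent_le_max_div_three (m : ℕ) (x : ℝ) : tent m x ≤ max x 0 / 3 := by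
  refine max_le (by positivity) ?_
  have := abs_sub_comm x (tentCenter m) ▸ le_abs_self (tentCenter m - x)
  have := abs_nonneg (x - tentCenter m)
  rcases le_total x (3 / 4 * tentCenter m) with hx | hx
  · linarith [le_max_right x 0]
  · linarith [le_max_left x 0]

lemma le_two_mul_tentCenter (h : tent m x ≠ 0) : x ≤ 2 * tentCenter m := by
  have := (abs_lt.1 (tent_ne_zero_iff.1 h)).2
  linarith [tentCenter_pos m]

lemma tent_eq_zero_of_ne (hx : |x - tentCenter m| ≤ tentCenter m / 4) (h : m' ≠ m) :
    tent m' x = 0 := by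
  rw [tent_eq_zero_iff]
  obtain ⟨hx₁, hx₂⟩ := abs_le.1 hx
  have := tentCenter_pos m
  have := tentCenter_pos m'
  rcases h.lt_or_gt with h | h
  · have := tentCenter_le_half_of_lt h
    exact le_abs.2 (Or.inr (by linarith))
  · have := tentCenter_le_half_of_lt h
    exact le_abs.2 (Or.inl (by linarith))

lemma exists_forall_ne_tent_eq_zero (x : ℝ) : ∃ m, ∀ m' ≠ m, tent m' x = 0 := by
  by_cases h : ∃ m, tent m x ≠ 0
  · obtain ⟨m, hm⟩ := h
    exact ⟨m, fun m' => tent_eq_zero_of_ne (tent_ne_zero_iff.1 hm).le⟩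
  · push Not at h
    exact ⟨0, fun m' _ => h m'⟩

lemma abs_three_quarters_tentCenter_sub (m : ℕ) :
    |3 / 4 * tentCenter m - tentCenter m| = tentCenter m / 4 := by
  rw [show 3 / 4 * tentCenter m - tentCenter m = -(tentCenter m / 4) by ring, abs_neg,
    abs_of_pos (by linarith [tentCenter_pos m])]

lemma tent_add_tent_le (h : m ≠ m') (hx : tent m' x = 0) (hy : tent m y = 0) :
    tent m x + tent m' y ≤ |x - y| := by
  wlog hlt : m < m' generalizing m m' x y
  · rw [add_comm, abs_sub_comm]
    exact this h.symm hy hx (h.lt_or_gt.resolve_left hlt)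
  suffices ∃ z, tent m z = 0 ∧ tent m' z = 0 ∧ |x - z| + |z - y| = |x - y| by
    obtain ⟨z, hmz, hm'z, hz⟩ := this
    have := tent_le_abs_sub (x := y) hm'z
    rw [abs_sub_comm] at this
    linarith [tent_le_abs_sub (x := x) hmz]
  by_cases hmx : tent m x = 0
  · exact ⟨x, hmx, hx, by simp⟩
  by_cases hm'y : tent m' y = 0
  · exact ⟨y, hy, hm'y, by simp⟩
  have hxm := abs_lt.1 (tent_ne_zero_iff.1 hmx)
  have hym := abs_lt.1 (tent_ne_zero_iff.1 hm'y)
  have := tentCenter_le_half_of_lt hlt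
  -- the left end of the support of `tent m` separates it from the support of `tent m'`
  have hcorner := abs_three_quarters_tentCenter_sub m
  refine ⟨3 / 4 * tentCenter m, tent_eq_zero_iff.2 hcorner.ge,
    tent_eq_zero_of_ne hcorner.le (Ne.symm h), ?_⟩
  rw [abs_of_pos (by linarith), abs_of_pos (by linarith), abs_of_pos (by linarith)]
  ring

noncomputable def tentSum (c : ℕ → ℝ) (x : ℝ) : ℝ := ∑' m, c m * tent m x

lemma tentSum_eq_of_forall_ne (hx : ∀ m' ≠ m, tent m' x = 0) (c : ℕ → ℝ) :
    tentSum c x = c m * tent m x :=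
  tsum_eq_single m fun m' h => by rw [hx m' h, mul_zero]

noncomputable def tentSumₗ : (ℕ → ℝ) →ₗ[ℝ] ℝ → ℝ where
  toFun := tentSum
  map_add' c d := funext fun x => by
    obtain ⟨m, hm⟩ := exists_forall_ne_tent_eq_zero x
    simp only [Pi.add_apply, tentSum_eq_of_forall_ne hm, add_mul]
  map_smul' r c := funext fun x => by
    obtain ⟨m, hm⟩ := exists_forall_ne_tent_eq_zero x
    simp only [Pi.smul_apply, smul_eq_mul, RingHom.id_apply, tentSum_eq_of_forall_ne hm, mul_assoc]

lemma tentSum_apply_zero (c : ℕ → ℝ) : tentSum c 0 = 0 := by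
  have (m : ℕ) : tent m 0 = 0 := le_antisymm (by simpa using tent_le_max_div_three m 0) tent_nonneg
  simp [tentSum, this]

lemma tentSum_tentCenter (c : ℕ → ℝ) (m : ℕ) :
    tentSum c (tentCenter m) = c m * (tentCenter m / 4) := by
  have hm : |tentCenter m - tentCenter m| ≤ tentCenter m / 4 := by
    rw [sub_self, abs_zero]; linarith [tentCenter_pos m]
  rw [tentSum_eq_of_forall_ne fun m' => tent_eq_zero_of_ne hm, tent, sub_self, abs_zero,
    sub_zero, max_eq_right (by linarith [tentCenter_pos m])]

lemma tentSum_three_quarters_tentCenter (c : ℕ → ℝ) (m : ℕ) :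
    tentSum c (3 / 4 * tentCenter m) = 0 := by
  have hm := abs_three_quarters_tentCenter_sub m
  rw [tentSum_eq_of_forall_ne fun m' => tent_eq_zero_of_ne hm.le, tent_eq_zero_iff.2 hm.ge,
    mul_zero]

variable {c : ℕ → ℝ} {L : ℝ}

lemma abs_mul_tent_le (h : tent m x ≠ 0 → |c m| ≤ L) : |c m * tent m x| ≤ L * tent m x := by
  rw [abs_mul, abs_of_nonneg tent_nonneg]
  by_cases hm : tent m x = 0
  · simp [hm]
  · exact mul_le_mul_of_nonneg_right (h hm) tent_nonneg

lemma abs_tentSum_sub_le (hL : 0 ≤ L) (hx : ∀ m, tent m x ≠ 0 → |c m| ≤ L)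
    (hy : ∀ m, tent m y ≠ 0 → |c m| ≤ L) : |tentSum c x - tentSum c y| ≤ L * |x - y| := by
  obtain ⟨m, hm⟩ := exists_forall_ne_tent_eq_zero x
  obtain ⟨m', hm'⟩ := exists_forall_ne_tent_eq_zero y
  rw [tentSum_eq_of_forall_ne hm, tentSum_eq_of_forall_ne hm']
  rcases eq_or_ne m m' with rfl | hne
  · rw [← mul_sub, abs_mul]
    by_cases hc : tent m x ≠ 0 ∨ tent m y ≠ 0
    · exact mul_le_mul (hc.elim (hx m) (hy m)) (abs_tent_sub_tent_le m x y) (abs_nonneg _) hL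
    · push Not at hc
      simp [hc.1, hc.2, mul_nonneg hL (abs_nonneg (x - y))]
  · calc |c m * tent m x - c m' * tent m' y|
        ≤ |c m * tent m x| + |c m' * tent m' y| := abs_sub _ _
      _ ≤ L * tent m x + L * tent m' y :=
        add_le_add (abs_mul_tent_le (hx m)) (abs_mul_tent_le (hy m'))
      _ ≤ L * |x - y| := by
        rw [← mul_add]
        exact mul_le_mul_of_nonneg_left (tent_add_tent_le hne (hm m' hne.symm) (hm' m hne)) hL

lemma lipschitzWith_tentSum {K : ℝ≥0} (hc : ∀ m, |c m| ≤ K) : LipschitzWith K (tentSum c) :=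
  LipschitzWith.of_dist_le_mul fun x y => by
    simpa only [Real.dist_eq] using
      abs_tentSum_sub_le K.coe_nonneg (fun m _ => hc m) (fun m _ => hc m)

lemma abs_tentSum_le (hc : ∀ m, |c m| ≤ L) (x : ℝ) : |tentSum c x| ≤ L * (max x 0 / 3) := by
  obtain ⟨m, hm⟩ := exists_forall_ne_tent_eq_zero x
  rw [tentSum_eq_of_forall_ne hm, abs_mul, abs_of_nonneg tent_nonneg]
  exact mul_le_mul (hc m) (tent_le_max_div_three m x) tent_nonneg ((abs_nonneg _).trans (hc m))

noncomputable def coeffs : ℓ^∞(ℕ, ℝ) →ₗ[ℝ] ℕ → ℝ where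
  toFun a m := (1 - tentCenter m) * a (Nat.unpair m).1
  map_add' a b := by ext m; simp [mul_add]
  map_smul' r a := by ext m; simp; ring

variable {a : ℓ^∞(ℕ, ℝ)}

lemma abs_coeffs_le (a : ℓ^∞(ℕ, ℝ)) (m : ℕ) : |coeffs a m| ≤ (1 - tentCenter m) * ‖a‖ := by
  have hw : 0 ≤ 1 - tentCenter m := sub_nonneg.2 (tentCenter_le_one m)
  simp only [coeffs, LinearMap.coe_mk, AddHom.coe_mk, abs_mul, abs_of_nonneg hw]
  exact mul_le_mul_of_nonneg_left (lp.norm_apply_le_norm ENNReal.top_ne_zero a _) hw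

lemma abs_coeffs_le_norm (a : ℓ^∞(ℕ, ℝ)) (m : ℕ) : |coeffs a m| ≤ ‖a‖ :=
  (abs_coeffs_le a m).trans (by nlinarith [tentCenter_pos m, norm_nonneg a])

lemma abs_coeffs_le_of_tent_ne_zero (h : tent m x ≠ 0) : |coeffs a m| ≤ (1 - x / 2) * ‖a‖ :=
  (abs_coeffs_le a m).trans <|
    mul_le_mul_of_nonneg_right (by linarith [le_two_mul_tentCenter h]) (norm_nonneg a)

lemma exists_abs_eq_norm_tendsto_comp (a : ℓ^∞(ℕ, ℝ)) :
    ∃ z, |z| = ‖a‖ ∧ ∃ n : ℕ → ℕ, Tendsto (fun j => a (n j)) atTop (𝓝 z) := by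
  have hle : ∀ i, ‖a i‖ ≤ ‖a‖ := lp.norm_apply_le_norm ENNReal.top_ne_zero a
  obtain ⟨u, -, hu, hmem⟩ :=
    exists_seq_tendsto_sSup (Set.range_nonempty fun i => ‖a i‖) ⟨‖a‖, by simpa [upperBounds]⟩
  choose k hk using hmem
  obtain ⟨z, -, φ, hφ, hz⟩ := tendsto_subseq_of_bounded (Metric.isBounded_closedBall (x := 0))
    (x := fun j => a (k j)) fun j => by simpa using hle (k j)
  refine ⟨z, ?_, k ∘ φ, hz⟩
  have hnorm : Tendsto (fun j => ‖a (k (φ j))‖) atTop (𝓝 ‖a‖) := by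
    rw [lp.norm_eq_ciSup]
    simp only [hk]
    exact hu.comp hφ.tendsto_atTop
  exact tendsto_nhds_unique hz.norm hnorm

lemma exists_tendsto_coeffs (a : ℓ^∞(ℕ, ℝ)) : ∃ z, |z| = ‖a‖ ∧
    ∃ m : ℕ → ℕ, Tendsto m atTop atTop ∧ Tendsto (fun j => coeffs a (m j)) atTop (𝓝 z) := by
  obtain ⟨z, hz, n, hn⟩ := exists_abs_eq_norm_tendsto_comp a
  have hm : Tendsto (fun j => Nat.pair (n j) j) atTop atTop :=
    tendsto_atTop_mono (fun j => Nat.right_le_pair _ _) tendsto_id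
  refine ⟨z, hz, _, hm, ?_⟩
  simpa [coeffs] using ((tendsto_tentCenter.comp hm).const_sub 1).mul hn

lemma exists_lt_norm_forall_abs_tentSum_coeffs_sub_le (ha : a ≠ 0) (x : ℝ) : ∃ B < ‖a‖, 0 ≤ B ∧
    ∀ y, |tentSum (coeffs a) x - tentSum (coeffs a) y| ≤ B * |x - y| := by
  have hA : 0 < ‖a‖ := norm_pos_iff.2 ha
  have hfar : ∀ y, |tentSum (coeffs a) x - tentSum (coeffs a) y|
      ≤ ‖a‖ * ((max x 0 + max y 0) / 3) := fun y =>
    (abs_sub _ _).trans <| by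
      linarith [abs_tentSum_le (abs_coeffs_le_norm a) x, abs_tentSum_le (abs_coeffs_le_norm a) y]
  rcases le_or_gt x 0 with hx | hx
  · refine ⟨‖a‖ / 3, by linarith, by positivity, fun y => (hfar y).trans ?_⟩
    have : max y 0 ≤ |x - y| := max_le (by rw [abs_sub_comm]; linarith [le_abs_self (y - x)])
      (abs_nonneg _)
    rw [max_eq_right hx]
    nlinarith
  -- For `y ≤ x / 4` both values are small against `|x - y|`; otherwise every tent met has its
  -- centre beyond `x / 8`, hence a coefficient at most `(1 - x / 8) ‖a‖`.
  have hmax : max (5 / 9 : ℝ) (1 - x / 8) < 1 := max_lt (by norm_num) (by linarith)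
  have hfar_le : ‖a‖ * (5 / 9) ≤ ‖a‖ * max (5 / 9) (1 - x / 8) := by gcongr; exact le_max_left _ _
  have hnear_le : ‖a‖ * (1 - x / 8) ≤ ‖a‖ * max (5 / 9) (1 - x / 8) := by
    gcongr; exact le_max_right _ _
  refine ⟨_, mul_lt_of_lt_one_right hA hmax, by positivity, fun y => ?_⟩
  rcases le_or_gt y (x / 4) with hy | hy
  · have hy' : max y 0 ≤ x / 4 := max_le hy (by linarith)
    have hxy : 3 / 4 * x ≤ |x - y| := by rw [abs_of_pos (by linarith)]; linarith
    calc _ ≤ ‖a‖ * ((max x 0 + max y 0) / 3) := hfar y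
      _ ≤ ‖a‖ * (5 / 9) * |x - y| := by rw [max_eq_left hx.le]; nlinarith
      _ ≤ _ := by gcongr
  · have hcoeff : ∀ z, x / 4 ≤ z → ∀ m, tent m z ≠ 0 →
        |coeffs a m| ≤ ‖a‖ * max (5 / 9) (1 - x / 8) := fun z hz m hm =>
      (abs_coeffs_le_of_tent_ne_zero hm).trans (by nlinarith)
    exact abs_tentSum_sub_le (by positivity) (hcoeff x (by linarith)) (hcoeff y hy.le)

variable {X : Type*} [NormedAddCommGroup X] [NormedSpace ℝ X]

noncomputable def embed (g : X →L[ℝ] ℝ) : ℓ^∞(ℕ, ℝ) →ₗ[ℝ] X → ℝ :=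
  LinearMap.funLeft ℝ ℝ g ∘ₗ tentSumₗ ∘ₗ coeffs

lemma embed_apply (g : X →L[ℝ] ℝ) (a : ℓ^∞(ℕ, ℝ)) (P : X) :
    embed g a P = tentSum (coeffs a) (g P) := rfl

variable {g : X →L[ℝ] ℝ} {e : X} {a : ℓ^∞(ℕ, ℝ)}

lemma embed_apply_zero : embed g a 0 = 0 := by
  rw [embed_apply, map_zero, tentSum_apply_zero]

lemma lipschitzWith_embed (hg : LipschitzWith 1 g) (a : ℓ^∞(ℕ, ℝ)) :
    LipschitzWith ‖a‖₊ (embed g a) := by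
  have h := (lipschitzWith_tentSum (K := ‖a‖₊) (by simpa using abs_coeffs_le_norm a)).comp hg
  rw [mul_one] at h
  exact h

lemma exists_tendsto_slope_embed (he : ‖e‖ = 1) (hge : g e = 1) (a : ℓ^∞(ℕ, ℝ)) :
    ∃ z, |z| = ‖a‖ ∧ ∃ p q : ℕ → X, (∀ n, p n ≠ q n) ∧
      Tendsto (fun n => (embed g a (q n) - embed g a (p n)) / ‖q n - p n‖) atTop (𝓝 z) ∧
      Tendsto (fun n => ‖p n - q n‖⁻¹ • (p n - q n)) atTop (𝓝 (-e)) ∧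
      Tendsto p atTop (𝓝 0) ∧ Tendsto q atTop (𝓝 0) := by
  obtain ⟨z, hz, m, hm, hcoeff⟩ := exists_tendsto_coeffs a
  have ht : Tendsto (fun n => tentCenter (m n)) atTop (𝓝 0) := tendsto_tentCenter.comp hm
  have hline (s : ℝ) : g (s • e) = s := by simp [hge]
  have hsub (n : ℕ) : (3 / 4 * tentCenter (m n)) • e - tentCenter (m n) • e
      = (-(tentCenter (m n) / 4)) • e := by
    rw [← sub_smul]; ring_nf
  have hpos (n : ℕ) : 0 < tentCenter (m n) / 4 := by linarith [tentCenter_pos (m n)]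
  have hnorm (n : ℕ) : ‖(-(tentCenter (m n) / 4)) • e‖ = tentCenter (m n) / 4 := by
    rw [norm_smul, he, mul_one, norm_neg, Real.norm_of_nonneg (hpos n).le]
  refine ⟨z, hz, fun n => (3 / 4 * tentCenter (m n)) • e, fun n => tentCenter (m n) • e,
    fun n h => ?_, hcoeff.congr fun n => ?_, tendsto_const_nhds.congr fun n => ?_, ?_, ?_⟩
  · have := hnorm n
    rw [← hsub, show (3 / 4 * tentCenter (m n)) • e = tentCenter (m n) • e from h, sub_self,
      norm_zero] at this
    linarith [hpos n]
  · rw [embed_apply, embed_apply, hline, hline, tentSum_tentCenter,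
      tentSum_three_quarters_tentCenter, sub_zero, norm_sub_rev, hsub, hnorm,
      mul_div_cancel_right₀ _ (hpos n).ne']
  · rw [hsub, hnorm, smul_smul, inv_mul_eq_div, neg_div, div_self (hpos n).ne', neg_one_smul]
  · simpa using (ht.const_mul (3 / 4)).smul_const e
  · simpa using ht.smul_const e

lemma lipNorm_embed (hg : LipschitzWith 1 g) (he : ‖e‖ = 1) (hge : g e = 1) (a : ℓ^∞(ℕ, ℝ)) :
    lipNorm (embed g a) = ‖a‖ := by
  obtain ⟨z, hz, p, q, hpq, hslope, -⟩ := exists_tendsto_slope_embed he hge a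
  refine le_antisymm (by simpa using lipNorm_le (lipschitzWith_embed hg a)) ?_
  rw [← hz]
  exact abs_le_lipNorm_of_tendsto (lipschitzWith_embed hg a) hpq (by simpa [dist_eq_norm])

lemma locDirAttains_embed (hg : LipschitzWith 1 g) (he : ‖e‖ = 1) (hge : g e = 1)
    (a : ℓ^∞(ℕ, ℝ)) : LocDirAttains (embed g a) := by
  obtain ⟨z, hz, p, q, hpq, hslope, hdir, hp, hq⟩ := exists_tendsto_slope_embed he hge a
  exact ⟨0, -e, z, by rw [norm_neg, he], by rw [hz, lipNorm_embed hg he hge], p, q, hpq, hslope,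
    hdir, hp, hq⟩

lemma not_pointwiseAttains_embed (hg : LipschitzWith 1 g) (he : ‖e‖ = 1) (hge : g e = 1)
    (ha : a ≠ 0) : ¬ PointwiseAttains (embed g a) := by
  refine not_pointwiseAttains_of_forall_exists_lt fun P => ?_
  obtain ⟨B, hBa, hB0, hB⟩ := exists_lt_norm_forall_abs_tentSum_coeffs_sub_le ha (g P)
  refine ⟨B, (lipNorm_embed hg he hge a).symm ▸ hBa, hB0, fun Q => (hB (g Q)).trans ?_⟩
  simpa [Real.dist_eq] using mul_le_mul_of_nonneg_left (hg.dist_le_mul P Q) hB0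

end LinftyEmbedding

theorem linfty_in_LDirA_not_PNA_general {X : Type*} [NormedAddCommGroup X] [NormedSpace ℝ X]
    [Nontrivial X] :
    ∃ T : lp (fun _ : ℕ => ℝ) ⊤ →ₗ[ℝ] (X → ℝ),
      ∀ a : lp (fun _ : ℕ => ℝ) ⊤,
        MemLip0 (0 : X) (T a) ∧ lipNorm (T a) = ‖a‖ ∧
        (a ≠ 0 → LocDirAttains (T a) ∧ ¬ PointwiseAttains (T a)) := by
  obtain ⟨e, he⟩ := exists_norm_eq X zero_le_one
  obtain ⟨g, hg, hge⟩ := exists_dual_vector ℝ e (by simp [he])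
  replace hge : g e = 1 := by simpa [he] using hge
  replace hg : LipschitzWith 1 g := g.lipschitzWith_of_opNorm_le (by simp [hg])
  refine ⟨LinftyEmbedding.embed g, fun a => ⟨⟨LinftyEmbedding.embed_apply_zero, ‖a‖₊,
    LinftyEmbedding.lipschitzWith_embed hg a⟩, LinftyEmbedding.lipNorm_embed hg he hge a,
    fun ha => ⟨?_, ?_⟩⟩⟩
  · exact LinftyEmbedding.locDirAttains_embed hg he hge a
  · exact LinftyEmbedding.not_pointwiseAttains_embed hg he hge ha

/-- For every nontrivial real Banach space `X`, the set `(LDirA(X) \ PNA(X)) ∪ {0}`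
contains an isometric copy of `ℓ∞`. -/
theorem linfty_in_LDirA_not_PNA {X : Type*} [NormedAddCommGroup X] [NormedSpace ℝ X]
    [CompleteSpace X] [Nontrivial X] :
    ∃ T : lp (fun _ : ℕ => ℝ) ⊤ →ₗ[ℝ] (X → ℝ),
      ∀ a : lp (fun _ : ℕ => ℝ) ⊤,
        MemLip0 (0 : X) (T a) ∧ lipNorm (T a) = ‖a‖ ∧
        (a ≠ 0 → LocDirAttains (T a) ∧ ¬ PointwiseAttains (T a)) :=
  linfty_in_LDirA_not_PNA_general
end

section
/- For every nontrivial real Banach space X (pointed at its origin), the set (PNA(X) \ LDirA(X)) ∪ {0} contains an isometric copy of ℓ∞: there exists a linear map T : ℓ∞ → Lip₀(X) such that ‖T a‖ = ‖a‖_∞ for every a ∈ ℓ∞, and for every nonzero a ∈ ℓ∞, the function T a attains its pointwise norm but does not attain its norm locally directionally. -/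
open Filter Set
open scoped ZeroAtInfty ENNReal NNReal

/-!
Put `T a x := φ_a ‖x‖`, where `φ_a : ℝ → ℝ` is a sum of tents on pairwise far apart
intervals `(tentLeft j, tentRight j)` of `(0, ∞)`; the `j`-th tent has slope `tentSlope j < 1`
and is multiplied by `a n` for `n = (Nat.unpair j).1`, so every coordinate of `a` is carried by
infinitely many tents. Since every unit interval meets at most one tent, `φ_a` is
`tentSlope j * ‖a‖`-Lipschitz near each point, hence `‖a‖`-Lipschitz, and no pair of nearby
points has a slope close to `‖a‖`: the norm is not attained locally directionally. On the other
hand the slopes from `0` to the peaks of the tents carrying `a n` tend to `|a n|`, so the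
pointwise norm is attained at the origin.
-/

open Metric

noncomputable section

def tentLeft (j : ℕ) : ℝ := 2 ^ ((j + 1) ^ 2)

def tentRight (j : ℕ) : ℝ := 2 ^ ((j + 1) ^ 2 + (j + 1))

def tentMid (j : ℕ) : ℝ := (tentLeft j + tentRight j) / 2

/-- The slope of the `j`-th tent equals the ratio of its half-width to its centre, so the slope
from the origin to its peak is `tentSlope j ^ 2`, which tends to `1`. -/
def tentSlope (j : ℕ) : ℝ := (tentRight j - tentLeft j) / (tentRight j + tentLeft j)

def tent (j : ℕ) (t : ℝ) : ℝ := tentSlope j * max 0 (min (t - tentLeft j) (tentRight j - t))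

def tentSum (a : ℕ → ℝ) (t : ℝ) : ℝ := ∑' j, a (Nat.unpair j).1 * tent j t

end

lemma tentLeft_pos (j : ℕ) : 0 < tentLeft j := by unfold tentLeft; positivity

lemma tentLeft_lt_tentRight (j : ℕ) : tentLeft j < tentRight j :=
  pow_lt_pow_right₀ one_lt_two (by omega)

lemma tentRight_add_two_lt_tentLeft {i j : ℕ} (h : i < j) : tentRight i + 2 < tentLeft j := by
  have h4 : (2 : ℝ) ^ 2 ≤ tentRight i := pow_le_pow_right₀ one_le_two (by nlinarith)
  have h2 : 2 * tentRight i ≤ tentLeft j := by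
    rw [tentRight, ← pow_succ', tentLeft]
    exact pow_le_pow_right₀ one_le_two (by nlinarith)
  linarith

lemma tentSlope_pos (j : ℕ) : 0 < tentSlope j := by
  have := tentLeft_lt_tentRight j
  exact div_pos (by linarith) (by linarith [tentLeft_pos j])

lemma tentSlope_lt_one (j : ℕ) : tentSlope j < 1 := by
  have := tentLeft_pos j
  exact (div_lt_one (by linarith [tentLeft_lt_tentRight j])).2 (by linarith)

lemma tendsto_tentSlope : Tendsto tentSlope atTop (nhds 1) := by
  have hratio : ∀ j, tentLeft j / tentRight j = (1 / 2) ^ (j + 1) := fun j => by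
    rw [tentRight, pow_add, ← tentLeft, div_mul_cancel_left₀ (tentLeft_pos j).ne', one_div_pow,
      one_div]
  have hslope : ∀ j, tentSlope j = (1 - (1 / 2) ^ (j + 1)) / (1 + (1 / 2) ^ (j + 1)) :=
    fun j => by
    have := (tentLeft_pos j).trans (tentLeft_lt_tentRight j)
    rw [← hratio, tentSlope]
    field_simp
  have hpow : Tendsto (fun j : ℕ => (1 / 2 : ℝ) ^ (j + 1)) atTop (nhds 0) :=
    (tendsto_pow_atTop_nhds_zero_of_lt_one (by norm_num) (by norm_num)).comp
      (tendsto_add_atTop_nat 1)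
  have hlim := (tendsto_const_nhds (x := (1 : ℝ)).sub hpow).div
    (tendsto_const_nhds (x := (1 : ℝ)).add hpow) (by norm_num)
  rw [funext hslope]
  simpa only [sub_zero, add_zero, div_one, Pi.div_def] using hlim

lemma abs_tent_sub_le (j : ℕ) (s t : ℝ) : |tent j s - tent j t| ≤ tentSlope j * |s - t| := by
  have hlip : LipschitzWith 1 fun t : ℝ => max 0 (min (t - tentLeft j) (tentRight j - t)) := by
    simpa using ((LipschitzWith.id.sub (LipschitzWith.const (tentLeft j))).min
      ((LipschitzWith.const (tentRight j)).sub LipschitzWith.id)).const_max 0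
  rw [tent, tent, ← mul_sub, abs_mul, abs_of_nonneg (tentSlope_pos j).le]
  refine mul_le_mul_of_nonneg_left ?_ (tentSlope_pos j).le
  simpa [Real.dist_eq] using hlip.dist_le_mul s t

lemma mem_Ioo_of_tent_ne_zero {j : ℕ} {t : ℝ} (h : tent j t ≠ 0) :
    t ∈ Ioo (tentLeft j) (tentRight j) := by
  by_contra hout
  apply h
  rw [tent, max_eq_left, mul_zero]
  rw [mem_Ioo, not_and_or, not_lt, not_lt] at hout
  rcases hout with hle | hle
  · exact (min_le_left _ _).trans (by linarith)
  · exact (min_le_right _ _).trans (by linarith)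

lemma two_lt_dist_of_tent_ne_zero {i j : ℕ} {s t : ℝ} (hij : i ≠ j) (hs : tent i s ≠ 0)
    (ht : tent j t ≠ 0) : 2 < dist s t := by
  wlog hlt : i < j generalizing i j s t
  · rw [dist_comm]; exact this hij.symm ht hs (hij.symm.lt_of_le (not_lt.1 hlt))
  have := tentRight_add_two_lt_tentLeft hlt
  have hs' := mem_Ioo_of_tent_ne_zero hs
  have ht' := mem_Ioo_of_tent_ne_zero ht
  rw [Real.dist_eq, abs_sub_comm, abs_of_pos (by linarith [hs'.2, ht'.1])]
  linarith [hs'.2, ht'.1]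

lemma tent_eq_zero_of_le_tentLeft {j : ℕ} {t : ℝ} (ht : t ≤ tentLeft j) : tent j t = 0 := by
  by_contra h
  exact (mem_Ioo_of_tent_ne_zero h).1.not_ge ht

lemma tentMid_pos (j : ℕ) : 0 < tentMid j := by
  unfold tentMid; linarith [tentLeft_pos j, tentLeft_lt_tentRight j]

lemma tent_tentMid (j : ℕ) : tent j (tentMid j) = tentSlope j ^ 2 * tentMid j := by
  have hsum : tentRight j + tentLeft j ≠ 0 := by
    linarith [tentLeft_pos j, tentLeft_lt_tentRight j]
  have hmin : min (tentMid j - tentLeft j) (tentRight j - tentMid j) =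
      (tentRight j - tentLeft j) / 2 := by
    rw [tentMid]; ring_nf; exact min_self _
  rw [tent, hmin, max_eq_right (by linarith [tentLeft_lt_tentRight j]), tentMid, tentSlope]
  field_simp
  ring

lemma exists_forall_ne_tent_eq_zero (c : ℝ) :
    ∃ j, ∀ m ≠ j, ∀ t ∈ ball c 1, tent m t = 0 := by
  by_cases h : ∃ j, ∃ u ∈ ball c 1, tent j u ≠ 0
  · obtain ⟨j, u, hu, hju⟩ := h
    refine ⟨j, fun m hm t ht => by_contra fun hmt => ?_⟩
    have := two_lt_dist_of_tent_ne_zero hm hmt hju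
    linarith [dist_triangle_right t u c, mem_ball.1 ht, mem_ball.1 hu]
  · push Not at h
    exact ⟨0, fun m _ => h m⟩

lemma tentSum_eq_of_forall_ne {a : ℕ → ℝ} {j : ℕ} {t : ℝ} (h : ∀ m ≠ j, tent m t = 0) :
    tentSum a t = a (Nat.unpair j).1 * tent j t :=
  tsum_eq_single j fun m hm => by rw [h m hm, mul_zero]

lemma exists_tentSum_eqOn_ball (c : ℝ) :
    ∃ j, ∀ a, EqOn (tentSum a) (fun t => a (Nat.unpair j).1 * tent j t) (ball c 1) := by
  obtain ⟨j, hj⟩ := exists_forall_ne_tent_eq_zero c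
  exact ⟨j, fun a t ht => tentSum_eq_of_forall_ne fun m hm => hj m hm t ht⟩

lemma tentSum_add (a b : ℕ → ℝ) : tentSum (a + b) = tentSum a + tentSum b := by
  ext t
  obtain ⟨j, hj⟩ := exists_tentSum_eqOn_ball t
  simp only [Pi.add_apply, hj _ (mem_ball_self one_pos)]
  ring

lemma tentSum_smul (c : ℝ) (a : ℕ → ℝ) : tentSum (c • a) = c • tentSum a := by
  ext t
  obtain ⟨j, hj⟩ := exists_tentSum_eqOn_ball t
  simp only [Pi.smul_apply, smul_eq_mul, hj _ (mem_ball_self one_pos)]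
  ring

lemma tentSum_zero (a : ℕ → ℝ) : tentSum a 0 = 0 := by
  simp [tentSum, tent_eq_zero_of_le_tentLeft (tentLeft_pos _).le]

lemma tentSum_tentMid (a : ℕ → ℝ) (j : ℕ) :
    tentSum a (tentMid j) = a (Nat.unpair j).1 * (tentSlope j ^ 2 * tentMid j) := by
  rw [← tent_tentMid]
  refine tentSum_eq_of_forall_ne fun m hm => by_contra fun h => ?_
  have hmid : tent j (tentMid j) ≠ 0 := by
    rw [tent_tentMid]
    exact (mul_pos (pow_pos (tentSlope_pos j) 2) (tentMid_pos j)).ne'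
  linarith [two_lt_dist_of_tent_ne_zero hm h hmid, dist_self (tentMid j)]

lemma abs_sub_le_of_forall_abs_sub_lt {φ : ℝ → ℝ} {L r : ℝ} (hr : 0 < r)
    (h : ∀ s t, |s - t| < r → |φ s - φ t| ≤ L * |s - t|) (s t : ℝ) :
    |φ s - φ t| ≤ L * |s - t| := by
  wlog hst : s ≤ t generalizing s t
  · rw [abs_sub_comm, abs_sub_comm s]
    exact this t s (le_of_not_ge hst)
  obtain ⟨n, hn⟩ := exists_nat_gt ((t - s) / (r / 2))
  rw [div_lt_iff₀ (by positivity)] at hn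
  induction n generalizing s with
  | zero => simp at hn; linarith
  | succ n ih =>
    rcases lt_or_ge (t - s) r with hlt | hge
    · exact h s t (by rwa [abs_sub_comm, abs_of_nonneg (by linarith)])
    · have hstep := h s (s + r / 2) (by rw [abs_of_neg (by linarith)]; linarith)
      have hrest := ih (s + r / 2) (by linarith) (by push_cast at hn; linarith)
      calc |φ s - φ t| ≤ |φ s - φ (s + r / 2)| + |φ (s + r / 2) - φ t| := abs_sub_le _ _ _
        _ ≤ L * |s - (s + r / 2)| + L * |s + r / 2 - t| := add_le_add hstep hrest
        _ = L * |s - t| := by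
          rw [abs_of_neg (by linarith), abs_of_nonpos (by linarith),
            abs_of_nonpos (by linarith)]
          ring

section TentSumLipschitz

variable {a : ℕ → ℝ} {L : ℝ}

lemma exists_abs_tentSum_sub_le_on_ball (ha : ∀ n, |a n| ≤ L) (c : ℝ) :
    ∃ j, ∀ s ∈ ball c 1, ∀ t ∈ ball c 1,
      |tentSum a s - tentSum a t| ≤ tentSlope j * L * |s - t| := by
  obtain ⟨j, hj⟩ := exists_tentSum_eqOn_ball c
  refine ⟨j, fun s hs t ht => ?_⟩
  rw [hj a hs, hj a ht, ← mul_sub, abs_mul, mul_comm (tentSlope j), mul_assoc]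
  exact mul_le_mul (ha _) (abs_tent_sub_le j s t) (abs_nonneg _) ((abs_nonneg _).trans (ha 0))

lemma abs_tentSum_sub_le (ha : ∀ n, |a n| ≤ L) (s t : ℝ) :
    |tentSum a s - tentSum a t| ≤ L * |s - t| := by
  refine abs_sub_le_of_forall_abs_sub_lt one_pos (fun s t hst => ?_) s t
  obtain ⟨j, hj⟩ := exists_abs_tentSum_sub_le_on_ball ha s
  have ht : t ∈ ball s 1 := by rwa [mem_ball, Real.dist_eq, abs_sub_comm]
  have hL : 0 ≤ L := (abs_nonneg _).trans (ha 0)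
  exact (hj s (mem_ball_self one_pos) t ht).trans <|
    mul_le_mul_of_nonneg_right (mul_le_of_le_one_left hL (tentSlope_lt_one j).le) (abs_nonneg _)

end TentSumLipschitz

section LipschitzNorm

variable {M : Type*} [MetricSpace M] {f : M → ℝ} {L : ℝ} {p : M}

lemma lipNorm_eq_of_slopes (hle : ∀ x y, |f x - f y| ≤ L * dist x y)
    (hlt : ∀ w < L, ∃ q ≠ p, w < |f p - f q| / dist p q) : lipNorm f = L := by
  obtain ⟨q, hqp, -⟩ := hlt (L - 1) (by linarith)
  refine csSup_eq_of_forall_le_of_forall_lt_exists_gt ⟨_, p, q, hqp.symm, rfl⟩ ?_ ?_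
  · rintro _ ⟨x, y, hxy, rfl⟩
    exact (div_le_iff₀ (dist_pos.2 hxy)).2 (hle x y)
  · intro w hw
    obtain ⟨q, hqp, hq⟩ := hlt w hw
    exact ⟨_, ⟨p, q, hqp.symm, rfl⟩, hq⟩

lemma pointwiseAttains_of_slopes (hle : ∀ x y, |f x - f y| ≤ L * dist x y)
    (hlt : ∀ w < L, ∃ q ≠ p, w < |f p - f q| / dist p q) : PointwiseAttains f := by
  refine ⟨p, ?_⟩
  rw [lipNorm_eq_of_slopes hle hlt]
  obtain ⟨q, hqp, -⟩ := hlt (L - 1) (by linarith)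
  refine csSup_eq_of_forall_le_of_forall_lt_exists_gt ⟨_, q, hqp, rfl⟩ ?_ ?_
  · rintro _ ⟨q, hqp, rfl⟩
    exact (div_le_iff₀ (dist_pos.2 hqp.symm)).2 (hle p q)
  · intro w hw
    obtain ⟨q, hqp, hq⟩ := hlt w hw
    exact ⟨_, ⟨q, hqp, rfl⟩, hq⟩

end LipschitzNorm

lemma not_locDirAttains_of_locally_lt_lipNorm {X : Type*} [NormedAddCommGroup X]
    [NormedSpace ℝ X] {f : X → ℝ}
    (h : ∀ x, ∃ K < lipNorm f, ∃ U ∈ nhds x, ∀ p ∈ U, ∀ q ∈ U, |f p - f q| ≤ K * ‖p - q‖) :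
    ¬ LocDirAttains f := by
  rintro ⟨x, -, z, -, hz, p, q, hpq, hslope, -, hp, hq⟩
  obtain ⟨K, hK, U, hU, hKU⟩ := h x
  have hzK : |z| ≤ K := by
    refine le_of_tendsto hslope.abs ?_
    filter_upwards [hp hU, hq hU] with n hpn hqn
    rw [abs_div, abs_norm, div_le_iff₀ (norm_pos_iff.2 (sub_ne_zero.2 (hpq n).symm))]
    exact hKU _ hqn _ hpn
  linarith

section Radial

variable (X : Type*) [NormedAddCommGroup X]

noncomputable def radialTentSum : lp (fun _ : ℕ => ℝ) ⊤ →ₗ[ℝ] X → ℝ where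
  toFun a x := tentSum a ‖x‖
  map_add' a b := by
    ext x
    change tentSum ⇑(a + b) ‖x‖ = tentSum a ‖x‖ + tentSum b ‖x‖
    rw [lp.coeFn_add, tentSum_add, Pi.add_apply]
  map_smul' c a := by
    ext x
    change tentSum ⇑(c • a) ‖x‖ = c • tentSum a ‖x‖
    rw [lp.coeFn_smul, tentSum_smul, Pi.smul_apply]

variable {X}

lemma radialTentSum_apply_zero (a : lp (fun _ : ℕ => ℝ) ⊤) : radialTentSum X a 0 = 0 := by
  change tentSum a ‖(0 : X)‖ = 0
  rw [norm_zero, tentSum_zero]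

lemma abs_radialTentSum_sub_le (a : lp (fun _ : ℕ => ℝ) ⊤) (p q : X) :
    |radialTentSum X a p - radialTentSum X a q| ≤ ‖a‖ * dist p q := by
  have ha : ∀ n, |a n| ≤ ‖a‖ := lp.norm_apply_le_norm ENNReal.top_ne_zero a
  exact (abs_tentSum_sub_le ha ‖p‖ ‖q‖).trans
    (mul_le_mul_of_nonneg_left (dist_eq_norm p q ▸ abs_norm_sub_norm_le p q) (norm_nonneg a))

lemma exists_abs_radialTentSum_sub_le_on_ball (a : lp (fun _ : ℕ => ℝ) ⊤) (x : X) :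
    ∃ j, ∀ p ∈ ball x 1, ∀ q ∈ ball x 1,
      |radialTentSum X a p - radialTentSum X a q| ≤ tentSlope j * ‖a‖ * ‖p - q‖ := by
  have ha : ∀ n, |a n| ≤ ‖a‖ := lp.norm_apply_le_norm ENNReal.top_ne_zero a
  obtain ⟨j, hj⟩ := exists_abs_tentSum_sub_le_on_ball ha ‖x‖
  have hball : ∀ p ∈ ball x 1, ‖p‖ ∈ ball ‖x‖ 1 := fun p hp =>
    (abs_norm_sub_norm_le p x).trans_lt (mem_ball_iff_norm.1 hp)
  refine ⟨j, fun p hp q hq => (hj _ (hball p hp) _ (hball q hq)).trans ?_⟩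
  exact mul_le_mul_of_nonneg_left (abs_norm_sub_norm_le p q)
    (mul_nonneg (tentSlope_pos j).le (norm_nonneg a))

lemma exists_lt_slope_radialTentSum [NormedSpace ℝ X] [Nontrivial X]
    (a : lp (fun _ : ℕ => ℝ) ⊤) {w : ℝ} (hw : w < ‖a‖) :
    ∃ q ≠ 0, w < |radialTentSum X a 0 - radialTentSum X a q| / dist 0 q := by
  obtain ⟨e, he⟩ := exists_norm_eq X zero_le_one
  obtain ⟨n, hn⟩ : ∃ n, w < |a n| :=
    exists_lt_of_lt_ciSup (by simpa [lp.norm_eq_ciSup] using hw)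
  have hpair : Tendsto (Nat.pair n) atTop atTop :=
    tendsto_atTop_mono (Nat.right_le_pair n) tendsto_id
  have hlim : Tendsto (fun m => |a n| * tentSlope (Nat.pair n m) ^ 2) atTop (nhds (|a n|)) := by
    simpa using tendsto_const_nhds.mul ((tendsto_tentSlope.comp hpair).pow 2)
  obtain ⟨m, hm⟩ := (hlim.eventually (lt_mem_nhds hn)).exists
  set j := Nat.pair n m
  have hq : ‖tentMid j • e‖ = tentMid j := by
    rw [norm_smul, he, mul_one, Real.norm_of_nonneg (tentMid_pos j).le]
  refine ⟨tentMid j • e, fun h0 => (tentMid_pos j).ne' (by simpa [h0] using hq.symm), ?_⟩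
  change w < |radialTentSum X a 0 - tentSum a ‖tentMid j • e‖| / dist 0 (tentMid j • e)
  rw [radialTentSum_apply_zero, dist_zero_left, hq, tentSum_tentMid, Nat.unpair_pair, zero_sub,
    abs_neg, abs_mul, abs_of_pos (mul_pos (pow_pos (tentSlope_pos j) 2) (tentMid_pos j)),
    ← mul_assoc, mul_div_cancel_right₀ _ (tentMid_pos j).ne']
  exact hm

end Radial

theorem linfty_in_PNA_not_LDirA_general {X : Type*} [NormedAddCommGroup X] [NormedSpace ℝ X]
    [Nontrivial X] :
    ∃ T : lp (fun _ : ℕ => ℝ) ⊤ →ₗ[ℝ] (X → ℝ),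
      ∀ a : lp (fun _ : ℕ => ℝ) ⊤,
        MemLip0 (0 : X) (T a) ∧ lipNorm (T a) = ‖a‖ ∧
        (a ≠ 0 → PointwiseAttains (T a) ∧ ¬ LocDirAttains (T a)) := by
  refine ⟨radialTentSum X, fun a => ?_⟩
  have hle := abs_radialTentSum_sub_le (X := X) a
  have hlt : ∀ w < ‖a‖, ∃ q ≠ (0 : X), w < _ := fun w => exists_lt_slope_radialTentSum a
  have hnorm := lipNorm_eq_of_slopes hle hlt
  refine ⟨⟨radialTentSum_apply_zero a, ‖a‖₊, .of_dist_le_mul hle⟩, hnorm, fun ha =>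
    ⟨pointwiseAttains_of_slopes hle hlt, not_locDirAttains_of_locally_lt_lipNorm fun x => ?_⟩⟩
  obtain ⟨j, hj⟩ := exists_abs_radialTentSum_sub_le_on_ball a x
  refine ⟨tentSlope j * ‖a‖, ?_, ball x 1, ball_mem_nhds x one_pos, hj⟩
  rw [hnorm]
  exact mul_lt_of_lt_one_left (norm_pos_iff.2 ha) (tentSlope_lt_one j)

/-- For every nontrivial real Banach space `X`, the set `(PNA(X) \ LDirA(X)) ∪ {0}`
contains an isometric copy of `ℓ∞`. -/
theorem linfty_in_PNA_not_LDirA {X : Type*} [NormedAddCommGroup X] [NormedSpace ℝ X]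
    [CompleteSpace X] [Nontrivial X] :
    ∃ T : lp (fun _ : ℕ => ℝ) ⊤ →ₗ[ℝ] (X → ℝ),
      ∀ a : lp (fun _ : ℕ => ℝ) ⊤,
        MemLip0 (0 : X) (T a) ∧ lipNorm (T a) = ‖a‖ ∧
        (a ≠ 0 → PointwiseAttains (T a) ∧ ¬ LocDirAttains (T a)) :=
  linfty_in_PNA_not_LDirA_general
end
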